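/- For every n ≥ 2, the automorphisms ε_{n,1}, ε_{n,2}, …, ε_{n,n-1} of the free group F_n are free generators of a free group of rank n−1; that is, the subgroup of Aut(F_n) they generate is free with these elements as a free basis. -/

import Mathlib

/-- The basis-conjugating automorphism ε_{ij} of the free group:
`x_i ↦ x_j⁻¹ x_i x_j`, `x_l ↦ x_l` for `l ≠ i`. -/
def eps {n : ℕ} (i j : Fin n) : MulAut (FreeGroup (Fin n)) :=
  MonoidHom.toMulEquiv
    (FreeGroup.lift fun l =>
      if l = i then (FreeGroup.of j)⁻¹ * FreeGroup.of i * FreeGroup.of j else FreeGroup.of l)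
    (FreeGroup.lift fun l =>
      if l = i then FreeGroup.of j * FreeGroup.of i * (FreeGroup.of j)⁻¹ else FreeGroup.of l)
    (by ext l; by_cases h : l = i <;> by_cases h2 : j = i <;> simp [h, h2, mul_assoc])
    (by ext l; by_cases h : l = i <;> by_cases h2 : j = i <;> simp [h, h2, mul_assoc])

/-!
Write `x = x_n` and let `ι : F_{n-1} → F_n` be the inclusion on the other generators. The word
`w` in the `ε_{n,k}` fixes every `x_k` with `k < n` and sends `x` to `ι(w)⁻¹ x ι(w)`, so `w`
acts trivially only if `ι(w)` commutes with `x`. That forces `ι(w) = 1`: let `F_n` act on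
`F_n ⊕ F_n` with `x` swapping the two copies and the other generators acting by left
multiplication on the first copy only. Then `ι(w)` acts trivially on the second copy, and if it
commutes with `x` it acts on the first copy in the same way.
-/

section LeftRegularSumPerm

variable (G : Type*) [Group G]

def leftRegularSumPerm : G →* Equiv.Perm (G ⊕ G) :=
  (Equiv.Perm.sumCongrHom G G).comp ((MonoidHom.inl _ _).comp (MulAction.toPermHom G G))

variable {G}

lemma leftRegularSumPerm_apply_inl (g h : G) :
    leftRegularSumPerm G g (Sum.inl h) = Sum.inl (g * h) := rfl

lemma leftRegularSumPerm_apply_inr (g h : G) :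
    leftRegularSumPerm G g (Sum.inr h) = Sum.inr h := rfl

end LeftRegularSumPerm

lemma FreeGroup.map_eq_one_of_commute_of {α β : Type*} [DecidableEq β] {f : α → β} {b : β}
    (hb : ∀ a, f a ≠ b) {w : FreeGroup α} (h : Commute (of b) (map f w)) : map f w = 1 := by
  let θ : FreeGroup β →* Equiv.Perm (FreeGroup β ⊕ FreeGroup β) :=
    lift fun c => if c = b then Equiv.sumComm _ _ else leftRegularSumPerm _ (of c)
  have hθ : θ.comp (map f) = (leftRegularSumPerm _).comp (map f) := by
    ext a
    simp [θ, hb a]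
  have hθw : θ (map f w) = leftRegularSumPerm _ (map f w) := DFunLike.congr_fun hθ w
  have := DFunLike.congr_fun (h.map θ).eq (Sum.inl 1)
  simpa [θ, hθw, Equiv.Perm.mul_apply, leftRegularSumPerm_apply_inl,
    leftRegularSumPerm_apply_inr] using this

open FreeGroup

lemma eps_apply_of {n : ℕ} (i j l : Fin n) :
    eps i j (of l) = if l = i then (of j)⁻¹ * of i * of j else of l := by
  simp [eps, MonoidHom.toMulEquiv]

lemma eps_symm_apply_of {n : ℕ} (i j l : Fin n) :
    (eps i j).symm (of l) = if l = i then of j * of i * (of j)⁻¹ else of l := by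
  simp [eps, MonoidHom.toMulEquiv]

noncomputable def epsLastHom (n : ℕ) : FreeGroup (Fin (n + 1)) →* MulAut (FreeGroup (Fin (n + 2))) :=
  lift fun k => eps (Fin.last (n + 1)) k.castSucc

variable {n : ℕ}

lemma epsLastHom_apply_of_castSucc (w : FreeGroup (Fin (n + 1))) (k : Fin (n + 1)) :
    epsLastHom n w (of k.castSucc) = of k.castSucc := by
  have hk : k.castSucc ≠ Fin.last (n + 1) := (Fin.castSucc_lt_last k).ne
  induction w using FreeGroup.induction_on with
  | C1 => rfl
  | of j => simp [epsLastHom, eps_apply_of, hk]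
  | inv_of j _ => simp [epsLastHom, eps_symm_apply_of, hk]
  | mul u v hu hv => rw [_root_.map_mul, MulAut.mul_apply, hv, hu]

lemma epsLastHom_apply_map_castSucc (w v : FreeGroup (Fin (n + 1))) :
    epsLastHom n w (map Fin.castSucc v) = map Fin.castSucc v := by
  have : (epsLastHom n w).toMonoidHom.comp (map Fin.castSucc) = map Fin.castSucc := by
    ext k
    exact epsLastHom_apply_of_castSucc w k
  exact DFunLike.congr_fun this v

lemma epsLastHom_apply_of_last (w : FreeGroup (Fin (n + 1))) :
    epsLastHom n w (of (Fin.last (n + 1))) =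
      (map Fin.castSucc w)⁻¹ * of (Fin.last (n + 1)) * map Fin.castSucc w := by
  induction w using FreeGroup.induction_on with
  | C1 => simp
  | of j => simp [epsLastHom, eps_apply_of]
  | inv_of j _ => simp [epsLastHom, eps_symm_apply_of]
  | mul u v hu hv =>
    simp only [_root_.map_mul, MulAut.mul_apply, hv, _root_.map_inv, hu,
      epsLastHom_apply_map_castSucc]
    group

/-- For every `n ≥ 2` (here `n + 2`), the automorphisms
`ε_{n,1}, ε_{n,2}, …, ε_{n,n-1}` (0-based: `eps (Fin.last (n+1)) k` for `k ≠ Fin.last (n+1)`)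
freely generate a free group of rank `n - 1`: the canonical homomorphism from the free
group of rank `n - 1` sending the free generators to these automorphisms is injective,
so they form a free basis of the subgroup they generate. -/
theorem eps_last_free (n : ℕ) :
    Function.Injective
      (FreeGroup.lift (fun k : Fin (n + 1) => eps (Fin.last (n + 1)) k.castSucc) :
        FreeGroup (Fin (n + 1)) →* MulAut (FreeGroup (Fin (n + 2)))) := by
  refine (injective_iff_map_eq_one (epsLastHom n)).2 fun w hw => ?_
  have hconj := epsLastHom_apply_of_last w
  rw [hw, MulAut.one_apply] at hconj
  have hcomm : Commute (of (Fin.last (n + 1))) (map Fin.castSucc w) := by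
    rw [commute_iff_eq]
    conv_rhs => rw [hconj]
    group
  have := map_eq_one_of_commute_of (fun k => (Fin.castSucc_lt_last k).ne) hcomm
  exact map_injective (Fin.castSucc_injective _) (this.trans (map_one _).symm)
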